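/- For every differential operator with constant coefficients L on 𝒮'(ℝⁿ) (a finite linear combination of partial derivative operators) and every tempered distribution u ∈ 𝒮'(ℝⁿ), L(u) = ∫_{ℝⁿ} u L(δ), i.e., L(u) = u ∘ (L∘δ)̂, where L∘δ is the Schwartz family x ↦ L(δₓ). -/

import Mathlib

/-! `diffOp α c` is the adjoint of the operator `Lᵗ = ∑ t, c t (-1)^{|α t|} ∂^{α t}` on `𝒮(ℝⁿ)`.
Applied to `δₓ` this gives `L(δₓ) ψ = (Lᵗ ψ)(x)`, so the Schwartz family `x ↦ L(δₓ)` has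
associated operator `Lᵗ`, and `u ∘ Lᵗ = L u` for every `u`. -/

open SchwartzMap

/-- The Schwartz test function space `𝒮(ℝⁿ)`. -/
abbrev TestF (n : ℕ) := SchwartzMap (EuclideanSpace ℝ (Fin n)) ℝ

/-- The space of tempered distributions `𝒮'(ℝⁿ)`. -/
abbrev TempDist (n : ℕ) := TestF n →L[ℝ] ℝ

/-- The constant-coefficient differential operator `∂^α` on `𝒮(ℝⁿ)` for a
multi-index `α : Fin n → ℕ`. -/
noncomputable def partialPow {n : ℕ} (α : Fin n → ℕ) : TestF n →L[ℝ] TestF n :=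
  (List.ofFn fun j : Fin n =>
    (LineDeriv.lineDerivOpCLM ℝ (TestF n) (EuclideanSpace.single j (1 : ℝ)) :
      TestF n →L[ℝ] TestF n) ^ (α j)).prod

/-- The constant-coefficient differential operator on `𝒮'(ℝⁿ)` with multi-indices
`α t` and coefficients `c t`: the finite linear combination `∑ t, c t • ∂^{α t}`,
where the distributional derivative `∂^{α} u` is `φ ↦ (-1)^{|α|} u (∂^α φ)`,
so the sign `(-1)^{|α t|}` is absorbed into the coefficient. -/
noncomputable def diffOp {n N : ℕ} (α : Fin N → Fin n → ℕ) (c : Fin N → ℝ)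
    (u : TempDist n) : TempDist n :=
  ∑ t, (c t * (-1 : ℝ) ^ (∑ j, α t j)) • (u.comp (partialPow (α t)))

noncomputable def diracTempDist {n : ℕ} (x : EuclideanSpace ℝ (Fin n)) : TempDist n :=
  (BoundedContinuousFunction.evalCLM ℝ x).comp
    (SchwartzMap.toBoundedContinuousFunctionCLM ℝ (EuclideanSpace ℝ (Fin n)) ℝ)

noncomputable def diffOpTranspose {n N : ℕ} (α : Fin N → Fin n → ℕ) (c : Fin N → ℝ) :
    TestF n →L[ℝ] TestF n :=
  ∑ t, (c t * (-1 : ℝ) ^ (∑ j, α t j)) • partialPow (α t)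

theorem diffOp_eq_comp_diffOpTranspose {n N : ℕ} (α : Fin N → Fin n → ℕ) (c : Fin N → ℝ)
    (u : TempDist n) : diffOp α c u = u.comp (diffOpTranspose α c) := by
  ext ψ
  simp only [diffOp, diffOpTranspose, sum_apply,
    smul_apply, ContinuousLinearMap.comp_apply, smul_eq_mul, map_sum, map_smul]

theorem diffOp_diracTempDist_apply {n N : ℕ} (α : Fin N → Fin n → ℕ) (c : Fin N → ℝ)
    (x : EuclideanSpace ℝ (Fin n)) (ψ : TestF n) :
    diffOp α c (diracTempDist x) ψ = diffOpTranspose α c ψ x := by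
  rw [diffOp_eq_comp_diffOpTranspose]
  rfl

/-- Every constant-coefficient differential operator `L` on `𝒮'(ℝⁿ)` satisfies
`L(u) = ∫ u L(δ) = u ∘ (L∘δ)̂`, where `(L∘δ)̂` is the operator associated with the
Schwartz family `x ↦ L(δₓ)`. -/
theorem diffOp_as_superposition {n N : ℕ} (α : Fin N → Fin n → ℕ) (c : Fin N → ℝ)
    (Lδh : TestF n →L[ℝ] TestF n)
    (hLδh : ∀ (ψ : TestF n) (x : EuclideanSpace ℝ (Fin n)),
      Lδh ψ x = diffOp α c ((BoundedContinuousFunction.evalCLM ℝ x).comp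
        (SchwartzMap.toBoundedContinuousFunctionCLM ℝ (EuclideanSpace ℝ (Fin n)) ℝ)) ψ)
    (u : TempDist n) :
    diffOp α c u = u.comp Lδh := by
  have hLδh_eq : Lδh = diffOpTranspose α c := by
    ext ψ x
    exact (hLδh ψ x).trans (diffOp_diracTempDist_apply α c x ψ)
  rw [hLδh_eq, diffOp_eq_comp_diffOpTranspose]
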